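/- Let Z ∈ R^{n×q} with singular values γ_1, …, γ_{n∧q}, and σ > 0. Define g_σ(Z) = min_{S ⪰ σ Id_n} (1/2)Tr(Zᵀ S⁻¹ Z) + (1/2)Tr(S). Then 0 ≤ g_σ(Z) − ‖Z‖_{S,1} = (1/(2σ))∑_{γ_i ≤ σ}(γ_i − σ)² + (1/2)(n − n∧q)σ ≤ (n/2)σ. In particular g_σ is an (n/2)σ-uniform approximation of the nuclear norm, with the upper bound attained at Z = 0. -/

import Mathlib

/-!
Write `A = Z Zᵀ`. For every `S ⪰ σ I` and every symmetric `B` with `B² ⪰ A`,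
`Tr(A S⁻¹) + Tr S ≥ 2 Tr B - σ⁻¹ Tr(B² - A)`: the inequality `Tr(B² S⁻¹) + Tr S ≥ 2 Tr B`
is `Tr((B - S) S⁻¹ (B - S)) ≥ 0`, and `Tr((B² - A) S⁻¹) ≤ σ⁻¹ Tr(B² - A)` because
`S⁻¹ ⪯ σ⁻¹ I`. For `B = max(A^{1/2}, σ)` (functional calculus) the bound is attained at `S = B`,
since `B - σ` and `B² - A` live on complementary spectral subspaces. Hence
`g_σ(Z) = ∑ᵢ (γᵢ² / max(γᵢ, σ) + max(γᵢ, σ)) / 2`, and each summand exceeds `γᵢ` by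
`(γᵢ - σ)² / (2σ)` if `γᵢ ≤ σ` and by `0` otherwise.
-/

open Matrix

/-- Singular values of a real `n × q` matrix (padded with zeros to length `n`). -/
noncomputable def singVal {n q : ℕ} (Z : Matrix (Fin n) (Fin q) ℝ) (i : Fin n) : ℝ :=
  Real.sqrt ((Matrix.isHermitian_mul_conjTranspose_self Z).eigenvalues i)

/-- Nuclear norm (Schatten 1-norm): sum of the singular values. -/
noncomputable def nucNorm {n q : ℕ} (Z : Matrix (Fin n) (Fin q) ℝ) : ℝ :=
  ∑ i, singVal Z i

/-- `g_σ(Z) = min_{S ⪰ σ Id} (1/2)Tr(Zᵀ S⁻¹ Z) + (1/2)Tr(S)`. -/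
noncomputable def gSmooth {n q : ℕ} (σ : ℝ) (Z : Matrix (Fin n) (Fin q) ℝ) : ℝ :=
  sInf {x : ℝ | ∃ S : Matrix (Fin n) (Fin n) ℝ, S.IsHermitian ∧
    (S - σ • (1 : Matrix (Fin n) (Fin n) ℝ)).PosSemidef ∧
    x = (1 / 2) * (Zᵀ * S⁻¹ * Z).trace + (1 / 2) * S.trace}

lemma sum_filter_sub_sq_le {ι : Type*} (s : Finset ι) (γ : ι → ℝ) (hγ : ∀ i, 0 ≤ γ i) (σ : ℝ) :
    ∑ i ∈ s.filter (fun i => γ i ≤ σ), (γ i - σ) ^ 2 ≤ s.card * σ ^ 2 := by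
  calc ∑ i ∈ s.filter (fun i => γ i ≤ σ), (γ i - σ) ^ 2
      ≤ ∑ _i ∈ s.filter (fun i => γ i ≤ σ), σ ^ 2 := by
        refine Finset.sum_le_sum fun i hi => ?_
        have hle := (Finset.mem_filter.mp hi).2
        nlinarith [hγ i]
    _ ≤ s.card * σ ^ 2 := by
        rw [Finset.sum_const, nsmul_eq_mul]
        gcongr
        exact Finset.filter_subset _ _

open scoped MatrixOrder

namespace Matrix

section SmulOneLe

variable {m : Type*} [DecidableEq m] {σ : ℝ} {S : Matrix m m ℝ}

lemma isHermitian_of_smul_one_le (hS : σ • (1 : Matrix m m ℝ) ≤ S) : S.IsHermitian := by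
  simpa using (le_iff.mp hS).isHermitian.add (isHermitian_one.smul (.all σ))

lemma posDef_of_smul_one_le (hσ : 0 < σ) (hS : σ • (1 : Matrix m m ℝ) ≤ S) : S.PosDef := by
  have hσ1 : (σ • (1 : Matrix m m ℝ)).PosDef := by
    rw [smul_one_eq_diagonal]
    exact posDef_diagonal_iff.mpr fun _ => hσ
  simpa using PosDef.posSemidef_add (le_iff.mp hS) hσ1

variable [Fintype m]

lemma inv_le_smul_one_of_smul_one_le (hσ : 0 < σ) (hS : σ • (1 : Matrix m m ℝ) ≤ S) :
    S⁻¹ ≤ σ⁻¹ • (1 : Matrix m m ℝ) := by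
  have hSa : IsSelfAdjoint S := isHermitian_of_smul_one_le hS
  rw [← Algebra.algebraMap_eq_smul_one] at hS ⊢
  have hspec := (algebraMap_le_iff_le_spectrum hSa).mp hS
  have hunit : IsUnit S := (spectrum.zero_notMem_iff ℝ).mp fun h0 => (hspec 0 h0).not_gt hσ
  rw [nonsing_inv_eq_ringInverse, ← cfc_ringInverse_id (R := ℝ) S hunit]
  exact cfc_le_algebraMap _ _ _ (fun x hx => inv_anti₀ hσ (hspec x hx))
    (finite_real_spectrum.continuousOn _)

end SmulOneLe

variable {m : Type*} [Fintype m] [DecidableEq m]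

lemma IsHermitian.trace_cfc {A : Matrix m m ℝ} (hA : A.IsHermitian) (f : ℝ → ℝ) :
    (cfc f A).trace = ∑ i, f (hA.eigenvalues i) := by
  rw [hA.cfc_eq, IsHermitian.cfc, Unitary.conjStarAlgAut_apply, trace_mul_cycle,
    Unitary.coe_star_mul_self, one_mul, trace_diagonal]
  rfl

lemma PosSemidef.trace_mul_nonneg {P Q : Matrix m m ℝ} (hP : P.PosSemidef) (hQ : Q.PosSemidef) :
    0 ≤ (P * Q).trace := by
  obtain ⟨C, rfl⟩ := CStarAlgebra.nonneg_iff_eq_star_mul_self.mp hP.nonneg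
  rw [star_eq_conjTranspose, ← trace_mul_cycle C Q Cᴴ]
  exact (hQ.mul_mul_conjTranspose_same C).trace_nonneg

lemma trace_mul_inv_le_of_smul_one_le {P S : Matrix m m ℝ} {σ : ℝ} (hP : P.PosSemidef)
    (hσ : 0 < σ) (hS : σ • (1 : Matrix m m ℝ) ≤ S) : (P * S⁻¹).trace ≤ σ⁻¹ * P.trace := by
  have h := hP.trace_mul_nonneg (inv_le_smul_one_of_smul_one_le hσ hS)
  rw [mul_sub, mul_smul_comm, mul_one, trace_sub, trace_smul, smul_eq_mul] at h
  linarith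

lemma two_mul_trace_le_trace_mul_inv_add_trace {B S : Matrix m m ℝ} (hB : B.IsHermitian)
    (hS : S.PosDef) : 2 * B.trace ≤ (B * B * S⁻¹).trace + S.trace := by
  have hunit : IsUnit S.det := hS.det_pos.ne'.isUnit
  have h := (hS.inv.posSemidef.mul_mul_conjTranspose_same (B - S)).trace_nonneg
  have hexpand : (B - S) * S⁻¹ * (B - S)ᴴ = B * S⁻¹ * B - B - B + S := by
    simp only [(hB.sub hS.isHermitian).eq, sub_mul, mul_sub, Matrix.mul_assoc,
      nonsing_inv_mul _ hunit, mul_nonsing_inv _ hunit, Matrix.mul_one, Matrix.one_mul]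
    abel
  rw [hexpand, trace_add, trace_sub, trace_sub, trace_mul_cycle B S⁻¹ B] at h
  linarith

lemma trace_mul_inv_add_trace_ge {A B S : Matrix m m ℝ} {σ : ℝ} (hσ : 0 < σ)
    (hB : B.IsHermitian) (hAB : A ≤ B * B) (hS : σ • (1 : Matrix m m ℝ) ≤ S) :
    2 * B.trace - σ⁻¹ * (B * B - A).trace ≤ (A * S⁻¹).trace + S.trace := by
  have h₁ := two_mul_trace_le_trace_mul_inv_add_trace hB (posDef_of_smul_one_le hσ hS)
  have h₂ := trace_mul_inv_le_of_smul_one_le hAB hσ hS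
  rw [sub_mul, trace_sub] at h₂
  linarith

noncomputable def sqrtMax (σ : ℝ) (A : Matrix m m ℝ) : Matrix m m ℝ :=
  cfc (fun x => max (√x) σ) A

variable {σ : ℝ} {A : Matrix m m ℝ}

lemma isHermitian_sqrtMax : (sqrtMax σ A).IsHermitian :=
  cfc_predicate (R := ℝ) _ A

lemma smul_one_le_sqrtMax (hA : A.IsHermitian) : σ • (1 : Matrix m m ℝ) ≤ sqrtMax σ A := by
  rw [← Algebra.algebraMap_eq_smul_one]
  exact algebraMap_le_cfc _ _ _ fun x _ => le_max_right _ _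

lemma le_sqrtMax_mul_self (hA : A.PosSemidef) : A ≤ sqrtMax σ A * sqrtMax σ A := by
  conv_lhs => rw [← cfc_id' ℝ A]
  rw [sqrtMax, ← cfc_mul ..]
  refine cfc_mono fun x hx => ?_
  have hx0 : 0 ≤ x := spectrum_nonneg_of_nonneg hA.nonneg hx
  calc x = √x * √x := (Real.mul_self_sqrt hx0).symm
    _ ≤ _ := mul_self_le_mul_self (Real.sqrt_nonneg x) (le_max_left _ _)

lemma trace_sqrtMax (hA : A.IsHermitian) :
    (sqrtMax σ A).trace = ∑ i, max (√(hA.eigenvalues i)) σ :=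
  hA.trace_cfc _

lemma trace_mul_inv_sqrtMax (hσ : 0 < σ) (hA : A.IsHermitian) :
    (A * (sqrtMax σ A)⁻¹).trace = ∑ i, hA.eigenvalues i / max (√(hA.eigenvalues i)) σ := by
  have hne : ∀ x ∈ spectrum ℝ A, max (√x) σ ≠ 0 :=
    fun x _ => (hσ.trans_le (le_max_right _ _)).ne'
  have h : A * (sqrtMax σ A)⁻¹ = cfc (fun x => x / max (√x) σ) A := by
    simp only [div_eq_mul_inv]
    rw [cfc_mul _ _ A (continuousOn_id' _) (finite_real_spectrum.continuousOn _), cfc_id' ℝ A,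
      cfc_inv _ A hne, sqrtMax, nonsing_inv_eq_ringInverse]
  rw [h, hA.trace_cfc]

lemma trace_sqrtMax_mul_self_sub (hA : A.IsHermitian) :
    (sqrtMax σ A * sqrtMax σ A - A).trace
      = ∑ i, (max (√(hA.eigenvalues i)) σ ^ 2 - hA.eigenvalues i) := by
  have h : sqrtMax σ A * sqrtMax σ A - A = cfc (fun x => max (√x) σ ^ 2 - x) A := by
    rw [cfc_sub .., cfc_pow .., cfc_id' ℝ A, sq, sqrtMax]
  rw [h, hA.trace_cfc]

theorem isLeast_trace_mul_inv_add_trace (hσ : 0 < σ) (hA : A.PosSemidef) :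
    IsLeast {x | ∃ S : Matrix m m ℝ, σ • 1 ≤ S ∧ x = (A * S⁻¹).trace + S.trace}
      (∑ i, (hA.1.eigenvalues i / max (√(hA.1.eigenvalues i)) σ
        + max (√(hA.1.eigenvalues i)) σ)) := by
  have hpoint : ∀ x, 0 ≤ x →
      x / max (√x) σ + max (√x) σ = 2 * max (√x) σ - σ⁻¹ * (max (√x) σ ^ 2 - x) := by
    intro x hx
    obtain ⟨s, hs, rfl⟩ : ∃ s, 0 ≤ s ∧ x = s ^ 2 :=
      ⟨√x, Real.sqrt_nonneg x, (Real.sq_sqrt hx).symm⟩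
    rw [Real.sqrt_sq hs]
    rcases le_total σ s with h | h
    · rw [max_eq_left h]
      field_simp [(hσ.trans_le h).ne']
      ring
    · rw [max_eq_right h]
      field_simp
      ring
  have hval : (A * (sqrtMax σ A)⁻¹).trace + (sqrtMax σ A).trace
      = ∑ i, (hA.1.eigenvalues i / max (√(hA.1.eigenvalues i)) σ
        + max (√(hA.1.eigenvalues i)) σ) := by
    rw [trace_mul_inv_sqrtMax hσ hA.1, trace_sqrtMax hA.1, Finset.sum_add_distrib]
  have hattained : (A * (sqrtMax σ A)⁻¹).trace + (sqrtMax σ A).trace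
      = 2 * (sqrtMax σ A).trace - σ⁻¹ * (sqrtMax σ A * sqrtMax σ A - A).trace := by
    rw [hval, trace_sqrtMax hA.1, trace_sqrtMax_mul_self_sub hA.1, Finset.mul_sum,
      Finset.mul_sum, ← Finset.sum_sub_distrib]
    exact Finset.sum_congr rfl fun i _ => hpoint _ (hA.eigenvalues_nonneg i)
  refine ⟨⟨sqrtMax σ A, smul_one_le_sqrtMax hA.1, hval.symm⟩, ?_⟩
  rintro _ ⟨S, hS, rfl⟩
  rw [← hval, hattained]
  exact trace_mul_inv_add_trace_ge hσ isHermitian_sqrtMax (le_sqrtMax_mul_self hA) hS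

end Matrix

section SingularValues

variable {n q : ℕ}

lemma singVal_nonneg (Z : Matrix (Fin n) (Fin q) ℝ) (i : Fin n) : 0 ≤ singVal Z i :=
  Real.sqrt_nonneg _

lemma singVal_zero (i : Fin n) : singVal (0 : Matrix (Fin n) (Fin q) ℝ) i = 0 := by
  have h0 : (isHermitian_mul_conjTranspose_self (0 : Matrix (Fin n) (Fin q) ℝ)).eigenvalues = 0 :=
    (IsHermitian.eigenvalues_eq_zero_iff _).mpr (by simp)
  rw [singVal, h0, Pi.zero_apply, Real.sqrt_zero]

lemma gSmooth_eq_sum {σ : ℝ} (hσ : 0 < σ) (Z : Matrix (Fin n) (Fin q) ℝ) :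
    gSmooth σ Z = ∑ i, (singVal Z i ^ 2 / max (singVal Z i) σ + max (singVal Z i) σ) / 2 := by
  have hA := posSemidef_self_mul_conjTranspose Z
  have hmin := isLeast_trace_mul_inv_add_trace hσ hA
  have htrace : ∀ S : Matrix (Fin n) (Fin n) ℝ,
      (1 / 2) * (Zᵀ * S⁻¹ * Z).trace + (1 / 2) * S.trace = ((Z * Zᴴ * S⁻¹).trace + S.trace) / 2 := by
    intro S
    rw [trace_mul_cycle, conjTranspose_eq_transpose_of_trivial]
    ring
  have hsum : ∑ i, (singVal Z i ^ 2 / max (singVal Z i) σ + max (singVal Z i) σ) / 2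
      = (∑ i, (hA.1.eigenvalues i / max (√(hA.1.eigenvalues i)) σ
        + max (√(hA.1.eigenvalues i)) σ)) / 2 := by
    rw [Finset.sum_div]
    refine Finset.sum_congr rfl fun i _ => ?_
    rw [singVal, Real.sq_sqrt (hA.eigenvalues_nonneg i)]
  rw [hsum]
  refine IsLeast.csInf_eq ⟨?_, ?_⟩
  · obtain ⟨S, hS, hx⟩ := hmin.1
    exact ⟨S, isHermitian_of_smul_one_le hS, hS, by rw [htrace, hx]⟩
  · rintro _ ⟨S, -, hS, rfl⟩
    rw [htrace]
    exact div_le_div_of_nonneg_right (hmin.2 ⟨S, hS, rfl⟩) zero_le_two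

lemma gSmooth_sub_nucNorm {σ : ℝ} (hσ : 0 < σ) (Z : Matrix (Fin n) (Fin q) ℝ) :
    gSmooth σ Z - nucNorm Z
      = (1 / (2 * σ)) * ∑ i ∈ Finset.univ.filter (fun i => singVal Z i ≤ σ),
          (singVal Z i - σ) ^ 2 := by
  have hterm : ∀ γ, 0 ≤ γ → (γ ^ 2 / max γ σ + max γ σ) / 2 - γ
      = if γ ≤ σ then 1 / (2 * σ) * (γ - σ) ^ 2 else 0 := by
    intro γ hγ
    rcases le_or_gt γ σ with h | h
    · rw [max_eq_right h, if_pos h]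
      field_simp
      ring
    · rw [max_eq_left h.le, if_neg h.not_ge]
      field_simp [(hσ.trans h).ne']
      ring
  rw [gSmooth_eq_sum hσ, nucNorm, ← Finset.sum_sub_distrib, Finset.mul_sum, Finset.sum_filter]
  exact Finset.sum_congr rfl fun i _ => hterm _ (singVal_nonneg Z i)

end SingularValues

open Classical in
/-- The sum runs over the `n` zero-padded singular values, which accounts for the
`(1/2)(n − n∧q)σ` term of the paper. -/
theorem stmt8 {n q : ℕ} (Z : Matrix (Fin n) (Fin q) ℝ) (σ : ℝ) (hσ : 0 < σ) :
    0 ≤ gSmooth σ Z - nucNorm Z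
      ∧ gSmooth σ Z - nucNorm Z
          = (1 / (2 * σ)) * ∑ i ∈ Finset.univ.filter (fun i => singVal Z i ≤ σ),
              (singVal Z i - σ) ^ 2
      ∧ gSmooth σ Z - nucNorm Z ≤ (n / 2) * σ
      ∧ gSmooth σ (0 : Matrix (Fin n) (Fin q) ℝ) - nucNorm (0 : Matrix (Fin n) (Fin q) ℝ)
          = (n / 2) * σ := by
  have hgap := gSmooth_sub_nucNorm hσ Z
  refine ⟨?_, hgap, ?_, ?_⟩
  · rw [hgap]
    exact mul_nonneg (by positivity) (Finset.sum_nonneg fun i _ => sq_nonneg _)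
  · have h := sum_filter_sub_sq_le Finset.univ (singVal Z) (singVal_nonneg Z) σ
    rw [Finset.card_univ, Fintype.card_fin] at h
    calc gSmooth σ Z - nucNorm Z ≤ (1 / (2 * σ)) * (n * σ ^ 2) := by
          rw [hgap]; gcongr
      _ = (n / 2) * σ := by field_simp
  · rw [gSmooth_sub_nucNorm hσ]
    simp only [singVal_zero, hσ.le, Finset.filter_true, zero_sub, neg_sq, Finset.sum_const,
      Finset.card_univ, Fintype.card_fin, nsmul_eq_mul]
    field_simp
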